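/- (Applied Bernstein inequality for bounded nonnegative functions) Let B > 0, let g be a measurable function on a measurable space S with 0 ≤ g ≤ B, and let Z_1, …, Z_n be independent S-valued random variables. Then for every t > 0, with probability at least 1 − exp(−n t): (1/n) Σ_{i=1}^n g(Z_i) ≤ (2/n) Σ_{i=1}^n E[g(Z_i)] + 7Bt/3. -/

import Mathlib

open MeasureTheory ProbabilityTheory Filter
open scoped ENNReal NNReal

noncomputable section

/-- The unit cube `[0,1]^d` in `ℝ^d`, equipped (via the `Pi` instance) with the `ℓ∞` metric. -/
def cube (d : ℕ) : Set (Fin d → ℝ) := Set.Icc 0 1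

/-- The `ε`-covering number of a set `S`: the least number of closed balls of radius `ε`
needed to cover `S` (as a real number; junk value `0` if no finite cover exists). -/
def coverNum {X : Type*} [PseudoMetricSpace X] (ε : ℝ) (S : Set X) : ℝ :=
  sInf {r : ℝ | ∃ T : Finset X, (S ⊆ ⋃ c ∈ T, Metric.closedBall c ε) ∧ r = T.card}

/-- `𝒩_ε(μ, τ)`: the smallest `ε`-covering number of a Borel set of `μ`-measure `≥ 1 - τ`. -/
def measCoverNum {X : Type*} [PseudoMetricSpace X] [MeasurableSpace X]
    (μ : Measure X) (ε τ : ℝ) : ℝ :=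
  sInf {r : ℝ | ∃ S : Set X, MeasurableSet S ∧ 1 - τ ≤ (μ S).toReal ∧ r = coverNum ε S}

/-- The `α`-entropic dimension of a measure `μ`:
`limsup_{ε ↓ 0} log 𝒩_ε(μ, ε^α) / log(1/ε)`. -/
def entDim {X : Type*} [PseudoMetricSpace X] [MeasurableSpace X] (μ : Measure X) (α : ℝ) : ℝ :=
  limsup (fun ε : ℝ => Real.log (measCoverNum μ ε (ε ^ α)) / Real.log (1 / ε))
    (nhdsWithin 0 (Set.Ioi 0))

/-- Essential supremum of a real-valued function with respect to a measure `π`. -/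
def essSupR {Θ : Type*} [MeasurableSpace Θ] (π : Measure Θ) (g : Θ → ℝ) : ℝ :=
  sInf {a : ℝ | π {θ | a < g θ} = 0}

/-- The `β`-Hölder norm of `f` on the cube `[0,1]^d`:
sum of the sup norms of the (Fréchet) derivatives of order `≤ ⌊β⌋` and the Hölder seminorm of
exponent `β - ⌊β⌋` of the derivative of order `⌊β⌋`. -/
def holderNorm (d : ℕ) (β : ℝ) (f : (Fin d → ℝ) → ℝ) : ℝ :=
  (∑ k ∈ Finset.range (⌊β⌋₊ + 1),
    ⨆ x : cube d, ‖iteratedFDerivWithin ℝ k f (cube d) x.1‖) +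
  ⨆ p : {q : ((Fin d → ℝ) × (Fin d → ℝ)) // q.1 ∈ cube d ∧ q.2 ∈ cube d ∧ q.1 ≠ q.2},
    ‖iteratedFDerivWithin ℝ ⌊β⌋₊ f (cube d) p.1.1 -
      iteratedFDerivWithin ℝ ⌊β⌋₊ f (cube d) p.1.2‖ / ‖p.1.1 - p.1.2‖ ^ (β - (⌊β⌋₊ : ℝ))

/-- `f ∈ H^β([0,1]^d, ℝ, C)`: `f` is `⌊β⌋` times continuously differentiable on the cube with
Hölder norm at most `C`. -/
def MemHolderBall (d : ℕ) (β C : ℝ) (f : (Fin d → ℝ) → ℝ) : Prop :=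
  ContDiffOn ℝ (⌊β⌋₊ : ℕ∞) f (cube d) ∧ holderNorm d β f ≤ C

/-- The ReLU activation. -/
def relu (x : ℝ) : ℝ := max x 0

/-- A fully connected feed-forward neural network with `L` affine layers, input dimension `d`
and output dimension `1`. -/
structure NeuralNet (d : ℕ) where
  L : ℕ
  hL : 0 < L
  w : ℕ → ℕ
  hw0 : w 0 = d
  hwL : w L = 1
  weight : (i : ℕ) → Matrix (Fin (w (i + 1))) (Fin (w i)) ℝ
  bias : (i : ℕ) → Fin (w (i + 1)) → ℝ

/-- Output of the first `k` affine layers of the network (with ReLU applied between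
consecutive affine layers; no activation on the input nor after the last computed layer). -/
def NeuralNet.evalAux {d : ℕ} (N : NeuralNet d) :
    (k : ℕ) → (Fin d → ℝ) → Fin (N.w k) → ℝ
  | 0, x, i => x (Fin.cast N.hw0 i)
  | (k + 1), x, j =>
      (N.weight k).mulVec
        (fun i => if k = 0 then N.evalAux k x i else relu (N.evalAux k x i)) j + N.bias k j

/-- The function `ℝ^d → ℝ` computed by the network: `A_L ∘ σ ∘ A_{L-1} ∘ ⋯ ∘ σ ∘ A_1`. -/
def NeuralNet.eval {d : ℕ} (N : NeuralNet d) (x : Fin d → ℝ) : ℝ :=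
  N.evalAux N.L x (Fin.cast N.hwL.symm (0 : Fin 1))

/-- Total number of weight and bias entries of a network. -/
def NeuralNet.numWeights {d : ℕ} (N : NeuralNet d) : ℕ :=
  ∑ i ∈ Finset.range N.L, (N.w (i + 1) * N.w i + N.w (i + 1))

/-- All weight and bias entries are bounded by `B` in absolute value. -/
def NeuralNet.weightsBounded {d : ℕ} (N : NeuralNet d) (B : ℝ) : Prop :=
  ∀ i < N.L, (∀ j k, |N.weight i j k| ≤ B) ∧ ∀ j, |N.bias i j| ≤ B

/-- The class `RN(L, W, B, R)` of ReLU networks with depth at most `L`, at most `W` weight and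
bias entries, all entries bounded by `B`, and sup-norm at most `R` on the cube. -/
def RNclass (d : ℕ) (L W : ℕ) (B R : ℝ) : Set ((Fin d → ℝ) → ℝ) :=
  {f | ∃ N : NeuralNet d, N.eval = f ∧ N.L ≤ L ∧ N.numWeights ≤ W ∧
        N.weightsBounded B ∧ ∀ x ∈ cube d, |f x| ≤ R}

/-- Squared `L²(ν)` norm of `g`. -/
def l2normSq {X : Type*} [MeasurableSpace X] (ν : Measure X) (g : X → ℝ) : ℝ :=
  ∫ x, (g x) ^ 2 ∂ν

/-- The averaged participating-client measure `λ̂^p_m = (1/m) ∑_{i=1}^m λ_{θ_i}`. -/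
def avgClient {Θ : Type*} [MeasurableSpace Θ] {d : ℕ}
    (lamK : Kernel Θ (Fin d → ℝ)) {m : ℕ} (θv : Fin m → Θ) : Measure (Fin d → ℝ) :=
  (m : ℝ≥0∞)⁻¹ • ∑ i : Fin m, (lamK (θv i) : Measure (Fin d → ℝ))

/-- The mixture `λ = ∫ λ_θ dπ(θ)`. -/
def mixture {Θ : Type*} [MeasurableSpace Θ] {d : ℕ} (π : Measure Θ)
    (lamK : Kernel Θ (Fin d → ℝ)) : Measure (Fin d → ℝ) :=
  π.bind fun θ => lamK θ

/-- Sample space for the two-stage model: client states, covariates, and noises. -/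
abbrev OmegaT (Θ : Type*) (d m n : ℕ) : Type _ :=
  ((Fin m → Θ) × ((Fin m × Fin n) → (Fin d → ℝ))) × ((Fin m × Fin n) → ℝ)

/-- Joint law of `(θ_1,…,θ_m)`, the covariates `x_{ij}` (conditionally i.i.d. `λ_{θ_i}`), and
the i.i.d. noises `ε_{ij}`. -/
def jointMeasure {Θ : Type*} [MeasurableSpace Θ] (π : Measure Θ) {d : ℕ}
    (lamK : Kernel Θ (Fin d → ℝ)) (τν : Measure ℝ) (m n : ℕ) :
    Measure (OmegaT Θ d m n) :=
  ((Measure.pi fun _ : Fin m => π).bind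
    (fun θv => (Measure.pi fun p : Fin m × Fin n => lamK (θv p.1)).map (Prod.mk θv))).prod
    (Measure.pi fun _ : Fin m × Fin n => τν)

/-- Conditional law of covariates and noises given the client states `θ_1,…,θ_m`. -/
def condMeasure {Θ : Type*} [MeasurableSpace Θ] {d : ℕ}
    (lamK : Kernel Θ (Fin d → ℝ)) (τν : Measure ℝ) {m : ℕ} (θv : Fin m → Θ) (n : ℕ) :
    Measure (((Fin m × Fin n) → (Fin d → ℝ)) × ((Fin m × Fin n) → ℝ)) :=
  (Measure.pi fun p : Fin m × Fin n => lamK (θv p.1)).prod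
    (Measure.pi fun _ : Fin m × Fin n => τν)

/-- `KL(P, Q) = ∫ log (dP/dQ) dP` (junk value if `P` is not absolutely continuous w.r.t. `Q`). -/
def klDivR {X : Type*} [MeasurableSpace X] (P Q : Measure X) : ℝ :=
  ∫ x, Real.log ((P.rnDeriv Q x).toReal) ∂P

/-- The set of admissible Orlicz-1 constants of `g` under `π`. -/
def psi1Set {Θ : Type*} [MeasurableSpace Θ] (π : Measure Θ) (g : Θ → ℝ) : Set ℝ :=
  {t : ℝ | 0 < t ∧ ∫ θ, Real.exp (|g θ| / t) ∂π ≤ 2}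

/-- The Orlicz-1 (`ψ₁`) norm of `g` under `π`. -/
def psi1NormR {Θ : Type*} [MeasurableSpace Θ] (π : Measure Θ) (g : Θ → ℝ) : ℝ :=
  sInf (psi1Set π g)

open Classical in
/-- The heterogeneity coefficient `Δ = min{‖KL(λ_θ, λ)‖_{ψ₁}, 1}` (equal to `1` when the
`ψ₁` norm is infinite). -/
def DeltaHet {Θ : Type*} [MeasurableSpace Θ] {d : ℕ} (π : Measure Θ)
    (lamK : Kernel Θ (Fin d → ℝ)) : ℝ :=
  if (psi1Set π fun θ => klDivR (lamK θ) (mixture π lamK)).Nonempty then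
    min (psi1NormR π fun θ => klDivR (lamK θ) (mixture π lamK)) 1
  else 1

/-- `F` pseudo-shatters `N` points. -/
def PShatters {X : Type*} (F : Set (X → ℝ)) (N : ℕ) : Prop :=
  ∃ (x : Fin N → X) (t : Fin N → ℝ), ∀ s : Fin N → Bool,
    ∃ f ∈ F, ∀ i, s i = true ↔ t i < f (x i)

/-- `D` is the pseudo-dimension of `F`: `D` points can be pseudo-shattered and no more. -/
def IsPdim {X : Type*} (F : Set (X → ℝ)) (D : ℕ) : Prop :=
  PShatters F D ∧ ∀ N, PShatters F N → N ≤ D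

/-- `ε`-covering number of a function class w.r.t. the sup norm on `S`. -/
def funCoverNum {X : Type*} (ε : ℝ) (F : Set (X → ℝ)) (S : Set X) : ℝ :=
  sInf {r : ℝ | ∃ G : Finset (X → ℝ),
    (∀ f ∈ F, ∃ g ∈ G, ∀ x ∈ S, |f x - g x| ≤ ε) ∧ r = G.card}


/-- **Applied Bernstein inequality for bounded nonnegative functions** (Lemma `app_bern`):
for independent `Z_i` and `0 ≤ g ≤ B`, with probability at least `1 − exp(−nt)`,
`(1/n) ∑ g(Z_i) ≤ (2/n) ∑ E g(Z_i) + 7Bt/3`. -/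
theorem applied_bernstein
    (S Ω : Type) [MeasurableSpace S] [MeasurableSpace Ω]
    (P : Measure Ω) [IsProbabilityMeasure P]
    (B : ℝ) (hB : 0 < B) (g : S → ℝ) (hgm : Measurable g)
    (hg0 : ∀ z, 0 ≤ g z) (hgB : ∀ z, g z ≤ B)
    (n : ℕ) (hn : 0 < n) (Z : Fin n → Ω → S)
    (hZm : ∀ i, Measurable (Z i))
    (hindep : iIndepFun Z P)
    (t : ℝ) (ht : 0 < t) :
    P {ω | (1 / n : ℝ) * ∑ i : Fin n, g (Z i ω) ≤
          (2 / n : ℝ) * ∑ i : Fin n, ∫ ω', g (Z i ω') ∂P + 7 * B * t / 3} ≥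
      ENNReal.ofReal (1 - Real.exp (-((n : ℝ) * t))) := by
  classical
  -- abbreviations
  set μi : Fin n → ℝ := fun i => ∫ ω', g (Z i ω') ∂P with hμi
  have hμi0 : ∀ i, 0 ≤ μi i := fun i => integral_nonneg fun ω => hg0 _
  have hXm : ∀ i, Measurable (fun ω => g (Z i ω)) := fun i => hgm.comp (hZm i)
  have hXindep : iIndepFun (fun i ω => g (Z i ω)) P :=
    hindep.comp (fun _ => g) (fun _ => hgm)
  have hBinv : (0:ℝ) ≤ B⁻¹ := by positivity
  -- integrability
  have hXint : ∀ i, Integrable (fun ω => g (Z i ω)) P := fun i =>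
    ⟨(hXm i).aestronglyMeasurable, HasFiniteIntegral.of_bounded (C := B)
      (ae_of_all _ fun ω => by
        rw [Real.norm_eq_abs, abs_of_nonneg (hg0 _)]; exact hgB _)⟩
  have hexpint : ∀ i, Integrable (fun ω => Real.exp (B⁻¹ * g (Z i ω))) P := fun i =>
    ⟨(((hXm i).const_mul _).exp).aestronglyMeasurable,
      HasFiniteIntegral.of_bounded (C := Real.exp 1) (ae_of_all _ fun ω => by
        rw [Real.norm_eq_abs, abs_of_pos (Real.exp_pos _)]
        apply Real.exp_le_exp.2
        rw [inv_mul_le_iff₀ hB, mul_one]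
        exact hgB _)⟩
  -- pointwise convexity bound
  have hpt : ∀ (x : ℝ), 0 ≤ x → x ≤ B → Real.exp (B⁻¹ * x) ≤ 1 + (Real.exp 1 - 1) * (B⁻¹ * x) := by
    intro x hx0 hxB
    have hs0 : 0 ≤ B⁻¹ * x := mul_nonneg hBinv hx0
    have hs1 : B⁻¹ * x ≤ 1 := by rw [inv_mul_le_iff₀ hB, mul_one]; exact hxB
    have h := convexOn_exp.2 (Set.mem_univ (0:ℝ)) (Set.mem_univ (1:ℝ))
      (by linarith : (0:ℝ) ≤ 1 - B⁻¹ * x) hs0 (by ring)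
    simp only [smul_eq_mul, mul_zero, mul_one, zero_add, Real.exp_zero] at h
    linarith
  -- mgf bound for each i
  have hmgf : ∀ i, mgf (fun ω => g (Z i ω)) P B⁻¹ ≤ Real.exp (2 * μi i / B) := by
    intro i
    have h3 : Real.exp 1 ≤ 3 := (Real.exp_one_lt_d9.le.trans (by norm_num))
    have step1 : mgf (fun ω => g (Z i ω)) P B⁻¹ ≤ 1 + (Real.exp 1 - 1) * (B⁻¹ * μi i) := by
      have := integral_mono (hexpint i)
        ((integrable_const (1:ℝ)).add (((hXint i).const_mul B⁻¹).const_mul (Real.exp 1 - 1)))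
        (fun ω => hpt _ (hg0 _) (hgB _))
      simp only [Pi.add_apply] at this
      rw [integral_add (integrable_const _) (((hXint i).const_mul B⁻¹).const_mul _),
        integral_const, probReal_univ, smul_eq_mul, one_mul,
        integral_const_mul, integral_const_mul] at this
      exact this
    refine step1.trans ?_
    have h2 : (Real.exp 1 - 1) * (B⁻¹ * μi i) ≤ 2 * μi i / B := by
      rw [div_eq_mul_inv]
      nlinarith [mul_nonneg (hμi0 i) hBinv, h3]
    have := Real.add_one_le_exp (2 * μi i / B)
    linarith
  -- Chernoff bound
  set c : ℝ := 2 * ∑ i, μi i + 7 * B * (n : ℝ) * t / 3 with hc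
  have hsumint : Integrable (fun ω => Real.exp (B⁻¹ * (∑ i : Fin n, fun ω => g (Z i ω)) ω)) P := by
    have := iIndepFun.integrable_exp_mul_sum (t := B⁻¹) hXindep hXm
      (s := Finset.univ) (fun i _ => hexpint i)
    simpa using this
  have hcher : (P {ω | c ≤ ∑ i : Fin n, g (Z i ω)}).toReal ≤ Real.exp (-((n:ℝ) * t)) := by
    have hmark := measure_ge_le_exp_mul_mgf (μ := P)
      (X := ∑ i : Fin n, fun ω => g (Z i ω)) c hBinv hsumint
    have hset : {ω | c ≤ (∑ i : Fin n, fun ω => g (Z i ω)) ω}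
        = {ω | c ≤ ∑ i : Fin n, g (Z i ω)} := by
      ext ω; simp [Finset.sum_apply]
    rw [hset, hXindep.mgf_sum hXm Finset.univ] at hmark
    refine hmark.trans ?_
    calc Real.exp (-B⁻¹ * c) * ∏ i : Fin n, mgf (fun ω => g (Z i ω)) P B⁻¹
        ≤ Real.exp (-B⁻¹ * c) * ∏ i : Fin n, Real.exp (2 * μi i / B) := by
          apply mul_le_mul_of_nonneg_left _ (Real.exp_pos _).le
          exact Finset.prod_le_prod (fun i _ => mgf_nonneg) (fun i _ => hmgf i)
      _ = Real.exp (-B⁻¹ * c + ∑ i : Fin n, 2 * μi i / B) := by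
          rw [← Real.exp_sum, ← Real.exp_add]
      _ ≤ Real.exp (-((n:ℝ) * t)) := by
          apply Real.exp_le_exp.2
          have hsum : ∑ i : Fin n, 2 * μi i / B = (2 * ∑ i, μi i) / B := by
            rw [Finset.mul_sum, Finset.sum_div]
          have hnt : 0 ≤ (n:ℝ) * t := mul_nonneg (Nat.cast_nonneg n) ht.le
          have heq : -B⁻¹ * c + (2 * ∑ i, μi i) / B = -(7 * (n:ℝ) * t / 3) := by
            rw [hc]; field_simp; ring
          rw [hsum, heq]
          linarith
  -- conclude
  set A : Set Ω := {ω | (1 / n : ℝ) * ∑ i : Fin n, g (Z i ω) ≤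
      (2 / n : ℝ) * ∑ i : Fin n, μi i + 7 * B * t / 3} with hA
  have hAm : MeasurableSet A := by
    apply measurableSet_le
    · exact (Finset.univ.measurable_sum fun i _ => hXm i).const_mul _
    · exact measurable_const
  have hsub : Aᶜ ⊆ {ω | c ≤ ∑ i : Fin n, g (Z i ω)} := by
    intro ω hω
    simp only [hA, Set.mem_compl_iff, Set.mem_setOf_eq, not_le] at hω
    simp only [Set.mem_setOf_eq, hc]
    have hn' : (0:ℝ) < (n:ℝ) := Nat.cast_pos.2 hn
    rw [div_mul_eq_mul_div, div_mul_eq_mul_div, div_add' _ _ _ hn'.ne',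
      div_lt_div_iff₀ hn' hn'] at hω
    nlinarith [hω]
  have hcompl : P Aᶜ ≤ ENNReal.ofReal (Real.exp (-((n:ℝ) * t))) := by
    refine (measure_mono hsub).trans ?_
    rw [ENNReal.le_ofReal_iff_toReal_le (measure_ne_top _ _) (Real.exp_pos _).le]
    exact hcher
  have hadd : P A + P Aᶜ = 1 := by
    rw [measure_add_measure_compl hAm, measure_univ]
  calc ENNReal.ofReal (1 - Real.exp (-((n:ℝ) * t)))
      = 1 - ENNReal.ofReal (Real.exp (-((n:ℝ) * t))) := by
        rw [ENNReal.ofReal_sub _ (Real.exp_pos _).le, ENNReal.ofReal_one]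
    _ ≤ 1 - P Aᶜ := tsub_le_tsub_left hcompl 1
    _ = P A := by
        rw [← hadd, ENNReal.add_sub_cancel_right (measure_ne_top _ _)]

end
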